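/- arXiv:2310.08486 — 5 statements merged into one kernel-verified Lean document; each statement's English description precedes it below -/
import Mathlib

section
/- Every graph with maximum degree at most 3 admits a partition of its vertex set into two parts V1, V2 such that every vertex in the subgraph induced by V1 has degree at most 1 in that subgraph, and every vertex in the subgraph induced by V2 has degree at most 1 in that subgraph. -/
/-!
Take a 2-colouring `f` minimising `∑ v, #{same-coloured neighbours of v}`, i.e. twice the number
of monochromatic edges. Recolouring a single vertex `v` only changes the status of the edges at
`v`, so it changes this sum by `2 * (deg v - 2 * k)`, where `k` is the number of neighbours of `v`
sharing its colour. Minimality therefore gives `2 * k ≤ deg v ≤ 3` at every vertex, i.e. `k ≤ 1`.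
-/

open Finset

theorem Fintype.sum_sum_eq_two_nsmul_sum_row_of_symm {V M : Type*} [Fintype V] [DecidableEq V]
    [AddCommMonoid M] (D : V → V → M) (v : V) (hsymm : ∀ u w, D u w = D w u)
    (hoff : ∀ u w, u ≠ v → w ≠ v → D u w = 0) (hvv : D v v = 0) :
    ∑ u, ∑ w, D u w = 2 • ∑ w, D v w := by
  have hrow : ∀ u, ∑ w, D u w = D u v + if u = v then ∑ w, D v w else 0 := by
    intro u
    rcases eq_or_ne u v with rfl | hu
    · simp [hvv]
    · rw [if_neg hu, add_zero]
      exact Fintype.sum_eq_single v fun w hw => hoff u w hu hw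
  rw [Finset.sum_congr rfl fun u _ => hrow u, sum_add_distrib, sum_ite_eq' v, two_nsmul]
  exact congrArg (· + _) (Finset.sum_congr rfl fun u _ => hsymm u v)

namespace SimpleGraph

variable {V : Type*} [Fintype V] (G : SimpleGraph V) [DecidableRel G.Adj]

def sameColorDegree {α : Type*} [DecidableEq α] (f : V → α) (v : V) : ℕ :=
  #{u ∈ G.neighborFinset v | f u = f v}

theorem sameColorDegree_eq_sum {α : Type*} [DecidableEq α] (f : V → α) (v : V) :
    (G.sameColorDegree f v : ℤ) = ∑ u, if G.Adj v u ∧ f u = f v then 1 else 0 := by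
  rw [sameColorDegree, card_filter, neighborFinset_eq_filter, sum_filter]
  push_cast
  simp only [ite_and]

variable [DecidableEq V]

theorem sameColorDegree_update_not_self_add (f : V → Bool) (v : V) :
    G.sameColorDegree (Function.update f v (!f v)) v + G.sameColorDegree f v = G.degree v := by
  have hflip : {u ∈ G.neighborFinset v |
      Function.update f v (!f v) u = Function.update f v (!f v) v} =
      {u ∈ G.neighborFinset v | ¬ f u = f v} := by
    refine filter_congr fun u hu => ?_
    rw [Function.update_of_ne (G.ne_of_adj ((G.mem_neighborFinset v u).1 hu)).symm,
      Function.update_self]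
    cases f u <;> cases f v <;> decide
  rw [sameColorDegree, sameColorDegree, hflip, add_comm, card_filter_add_card_filter_not,
    card_neighborFinset_eq_degree]

theorem sum_sameColorDegree_update_not (f : V → Bool) (v : V) :
    ∑ u, (G.sameColorDegree (Function.update f v (!f v)) u : ℤ)
      = ∑ u, (G.sameColorDegree f u : ℤ)
        + 2 * (G.sameColorDegree (Function.update f v (!f v)) v - G.sameColorDegree f v) := by
  set g := Function.update f v (!f v)
  have hg : ∀ u, u ≠ v → g u = f u := fun u hu => Function.update_of_ne hu _ _
  have key := Fintype.sum_sum_eq_two_nsmul_sum_row_of_symm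
    (fun u w => ((if G.Adj u w ∧ g w = g u then 1 else 0) -
      (if G.Adj u w ∧ f w = f u then 1 else 0) : ℤ)) v
    (fun u w => by simp only [G.adj_comm u w, eq_comm (a := g w), eq_comm (a := f w)])
    (fun u w hu hw => by simp only [hg u hu, hg w hw, sub_self])
    (by simp)
  simp only [sum_sub_distrib, ← sameColorDegree_eq_sum, two_nsmul] at key
  linarith

theorem exists_two_mul_sameColorDegree_le_degree :
    ∃ f : V → Bool, ∀ v, 2 * G.sameColorDegree f v ≤ G.degree v := by
  obtain ⟨f, -, hmin⟩ :=
    exists_min_image univ (fun f : V → Bool => ∑ u, (G.sameColorDegree f u : ℤ)) univ_nonempty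
  refine ⟨f, fun v => ?_⟩
  by_contra! hv
  have hself := G.sameColorDegree_update_not_self_add f v
  have hsum := G.sum_sameColorDegree_update_not f v
  have := hmin (Function.update f v (!f v)) (mem_univ _)
  omega

end SimpleGraph

/-- Every graph with maximum degree at most 3 admits a (1,1)-coloring:
a partition of vertices into two parts each inducing a subgraph of max degree ≤ 1. -/
theorem stmt0 {V : Type*} [Fintype V] (G : SimpleGraph V) [DecidableRel G.Adj]
    (h : ∀ v, G.degree v ≤ 3) :
    ∃ f : V → Bool, ∀ v,
      ((G.neighborFinset v).filter (fun u => f u = f v)).card ≤ 1 := by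
  classical
  obtain ⟨f, hf⟩ := G.exists_two_mul_sameColorDegree_le_degree
  refine ⟨f, fun v => ?_⟩
  change G.sameColorDegree f v ≤ 1
  have := hf v
  have := h v
  omega
end

section
/- If a graph G has maximum degree D and nonnegative integers d1,...,dk satisfy (d1+1)+(d2+1)+...+(dk+1) >= D+1, then V(G) can be partitioned into sets V1,...,Vk such that for each i, every vertex in Vi has at most di neighbors inside Vi. -/
/-!
Give colour `c` the weight `1 / (d c + 1)` and let the energy of a colouring be the total
weight of its monochromatic edges, each edge counted in both directions. Take a colouring of
minimal energy. If a vertex `v` of colour `i` had more than `d i` neighbours of colour `i`,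
the pigeonhole principle (`deg v ≤ D < ∑ (d c + 1)`) gives a colour `j` with at most `d j`
neighbours of colour `j` at `v`. Recolouring `v` with `j` changes the energy by twice the
change of the weight at `v`, which drops from at least `1` to below `1`: a contradiction.
-/

open Finset

theorem Fintype.sum_sum_eq_sum_add_sum_of_eq_zero {V M : Type*} [Fintype V] [DecidableEq V]
    [AddCommMonoid M] (h : V → V → M) (v : V) (hvv : h v v = 0)
    (hoff : ∀ a b, a ≠ v → b ≠ v → h a b = 0) :
    ∑ a, ∑ b, h a b = ∑ b, h v b + ∑ a, h a v := by
  rw [Fintype.sum_eq_add_sum_compl v (fun a => ∑ b, h a b),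
    Fintype.sum_eq_add_sum_compl v (fun a => h a v), hvv, zero_add]
  congr 1
  refine Finset.sum_congr rfl fun a ha => Fintype.sum_eq_single v fun b hb => hoff a b ?_ hb
  simpa using ha

namespace SimpleGraph

def defectWeight {α : Type*} (d : α → ℕ) (c : α) : ℚ :=
  1 / (d c + 1)

variable {V α : Type*} (G : SimpleGraph V) [DecidableRel G.Adj] [DecidableEq α]

def monoWeight (w : α → ℚ) (f : V → α) (a b : V) : ℚ :=
  if G.Adj a b ∧ f a = f b then w (f a) else 0

theorem monoWeight_comm (w : α → ℚ) (f : V → α) (a b : V) :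
    G.monoWeight w f a b = G.monoWeight w f b a := by
  unfold monoWeight
  by_cases h : f a = f b
  · simp [h, G.adj_comm]
  · simp [h, Ne.symm h]

variable [Fintype V]

def colorNeighborFinset (f : V → α) (v : V) (c : α) : Finset V :=
  (G.neighborFinset v).filter (fun u => f u = c)

theorem sum_card_colorNeighborFinset [Fintype α] (f : V → α) (v : V) :
    ∑ c, #(G.colorNeighborFinset f v c) = G.degree v := by
  rw [← card_neighborFinset_eq_degree]
  exact (card_eq_sum_card_fiberwise fun u _ => mem_univ (f u)).symm

theorem exists_card_colorNeighborFinset_le [Fintype α] (d : α → ℕ) (f : V → α) (v : V)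
    (hv : G.degree v < ∑ c, (d c + 1)) : ∃ c, #(G.colorNeighborFinset f v c) ≤ d c := by
  rw [← G.sum_card_colorNeighborFinset f v] at hv
  obtain ⟨c, -, hc⟩ := exists_lt_of_sum_lt hv
  exact ⟨c, Nat.le_of_lt_succ hc⟩

theorem colorNeighborFinset_update [DecidableEq V] (f : V → α) (v : V) (c c' : α) :
    G.colorNeighborFinset (Function.update f v c) v c' = G.colorNeighborFinset f v c' :=
  filter_congr fun u hu => by
    rw [Function.update_of_ne ((G.mem_neighborFinset v u).mp hu).ne']

theorem sum_monoWeight (w : α → ℚ) (f : V → α) (v : V) :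
    ∑ b, G.monoWeight w f v b = #(G.colorNeighborFinset f v (f v)) * w (f v) := by
  simp only [monoWeight]
  rw [← sum_filter, sum_const, nsmul_eq_mul, colorNeighborFinset]
  congr 3
  ext u
  simp [eq_comm]

def monoEnergy (w : α → ℚ) (f : V → α) : ℚ :=
  ∑ a, ∑ b, G.monoWeight w f a b

theorem monoEnergy_update_sub [DecidableEq V] (w : α → ℚ) (f : V → α) (v : V) (c : α) :
    G.monoEnergy w (Function.update f v c) - G.monoEnergy w f =
      2 * (∑ b, G.monoWeight w (Function.update f v c) v b - ∑ b, G.monoWeight w f v b) := by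
  set g := Function.update f v c
  have hsplit := Fintype.sum_sum_eq_sum_add_sum_of_eq_zero
    (fun a b => G.monoWeight w g a b - G.monoWeight w f a b) v
    (by simp [monoWeight]) fun a b ha hb => by
      simp [monoWeight, g, Function.update_of_ne ha, Function.update_of_ne hb]
  simp only [G.monoWeight_comm w _ _ v] at hsplit
  simp only [monoEnergy, ← sum_sub_distrib, hsplit]
  ring

theorem card_colorNeighborFinset_self_le_of_forall_monoEnergy_le [Fintype α] [DecidableEq V]
    (d : α → ℕ) (f : V → α)
    (hf : ∀ g, G.monoEnergy (defectWeight d) f ≤ G.monoEnergy (defectWeight d) g)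
    (v : V) (hv : G.degree v < ∑ c, (d c + 1)) :
    #(G.colorNeighborFinset f v (f v)) ≤ d (f v) := by
  by_contra! hbad
  obtain ⟨j, hj⟩ := G.exists_card_colorNeighborFinset_le d f v hv
  have hlt := hf (Function.update f v j)
  rw [← sub_nonneg, monoEnergy_update_sub, sum_monoWeight, sum_monoWeight, Function.update_self,
    colorNeighborFinset_update, defectWeight, defectWeight] at hlt
  have hnew : (#(G.colorNeighborFinset f v j) : ℚ) * (1 / (d j + 1)) < 1 := by
    rw [mul_one_div, div_lt_one (by positivity)]
    exact_mod_cast Nat.lt_succ_of_le hj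
  have hold : 1 ≤ (#(G.colorNeighborFinset f v (f v)) : ℚ) * (1 / (d (f v) + 1)) := by
    rw [mul_one_div, one_le_div (by positivity)]
    exact_mod_cast hbad
  linarith

end SimpleGraph

/-- Lovász's theorem on defective colorings. -/
theorem stmt1 {V : Type*} [Fintype V] (G : SimpleGraph V) [DecidableRel G.Adj]
    (D k : ℕ) (d : Fin k → ℕ)
    (hD : ∀ v, G.degree v ≤ D)
    (hsum : D + 1 ≤ ∑ i, (d i + 1)) :
    ∃ f : V → Fin k, ∀ v,
      ((G.neighborFinset v).filter (fun u => f u = f v)).card ≤ d (f v) := by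
  classical
  have : Nonempty (Fin k) := by
    rcases k with _ | k
    · simp at hsum
    · exact ⟨0⟩
  obtain ⟨f, -, hf⟩ :=
    exists_min_image univ (G.monoEnergy (SimpleGraph.defectWeight d)) univ_nonempty
  exact ⟨f, fun v => G.card_colorNeighborFinset_self_le_of_forall_monoEnergy_le d f
    (fun g => hf g (mem_univ g)) v ((Nat.lt_succ_of_le (hD v)).trans_le hsum)⟩
end

section
/- Every graph with maximum degree D admits a partition of its vertex set into floor(D/2)+1 parts such that each part induces a subgraph of maximum degree at most 1. -/
/-! Take a colouring with the fewest monochromatic edges. A vertex with two neighbours of its own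
colour has at most `D < 2 (⌊D/2⌋ + 1)` neighbours, so by pigeonhole some colour occurs at most once
among them; recolouring the vertex with it removes at least two monochromatic edges and adds at most
one, contradicting minimality. -/

open Finset

theorem Finset.sum_sum_add_cross_eq {ι M : Type*} [Fintype ι] [DecidableEq ι] [AddCommMonoid M]
    (I J : ι → ι → M) (v : ι) (hoff : ∀ a b, a ≠ v → b ≠ v → I a b = J a b)
    (hvv : I v v = J v v) :
    ∑ a, ∑ b, I a b + (∑ b, J v b + ∑ a, J a v) =
      ∑ a, ∑ b, J a b + (∑ b, I v b + ∑ a, I a v) := by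
  have hpt : ∀ a b, I a b + ((if a = v then J a b else 0) + (if b = v then J a b else 0)) =
      J a b + ((if a = v then I a b else 0) + (if b = v then I a b else 0)) := by
    intro a b
    by_cases ha : a = v <;> by_cases hb : b = v
    · subst ha hb; simp [hvv]
    · simp [ha, hb, add_comm]
    · simp [ha, hb, add_comm]
    · simp [ha, hb, hoff a b ha hb]
  have := Finset.sum_congr rfl fun a (_ : a ∈ univ) =>
    Finset.sum_congr rfl fun b (_ : b ∈ univ) => hpt a b
  simpa only [sum_add_distrib, sum_ite_irrel, sum_const_zero, sum_ite_eq', mem_univ, if_true]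
    using this

namespace SimpleGraph

variable {V α : Type*} [Fintype V] (G : SimpleGraph V) [DecidableRel G.Adj] [DecidableEq α]

def monochromaticDartCount (f : V → α) : ℕ := ∑ a, ∑ b, if G.Adj a b ∧ f a = f b then 1 else 0

theorem card_filter_neighborFinset_eq_sum (f : V → α) (v : V) (c : α) :
    #{u ∈ G.neighborFinset v | f u = c} = ∑ u, if G.Adj v u ∧ c = f u then 1 else 0 := by
  rw [card_filter, neighborFinset_eq_filter, sum_filter]
  simp only [ite_and, eq_comm]

theorem monochromaticDartCount_update_add [DecidableEq V] (f : V → α) (v : V) (c : α) :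
    G.monochromaticDartCount (Function.update f v c) + 2 * #{u ∈ G.neighborFinset v | f u = f v} =
      G.monochromaticDartCount f + 2 * #{u ∈ G.neighborFinset v | f u = c} := by
  set g := Function.update f v c
  have row (h : V → α) (d : α) (hd : ∀ u, G.Adj v u → (h v = h u ↔ d = f u)) :
      ∑ u, (if G.Adj v u ∧ h v = h u then 1 else 0) = #{u ∈ G.neighborFinset v | f u = d} := by
    rw [card_filter_neighborFinset_eq_sum]
    refine sum_congr rfl fun u _ => ?_
    by_cases hvu : G.Adj v u <;> simp [hvu, hd]
  have col (h : V → α) :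
      ∑ a, (if G.Adj a v ∧ h a = h v then 1 else 0) =
        ∑ u, (if G.Adj v u ∧ h v = h u then 1 else 0) :=
    sum_congr rfl fun a _ => by simp only [G.adj_comm a, eq_comm (a := h a)]
  have hrow_f := row f (f v) fun u _ => Iff.rfl
  have hrow_g := row g c fun u hvu => by simp [g, Function.update_of_ne hvu.ne']
  have := Finset.sum_sum_add_cross_eq
    (fun a b => if G.Adj a b ∧ g a = g b then 1 else 0)
    (fun a b => if G.Adj a b ∧ f a = f b then 1 else 0) v
    (fun a b ha hb => by simp [g, Function.update_of_ne ha, Function.update_of_ne hb]) (by simp)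
  simp only [col] at this
  rw [monochromaticDartCount, monochromaticDartCount]
  omega

theorem exists_card_filter_neighborFinset_le_one [Fintype α] (f : V → α) (v : V)
    (hv : G.degree v < 2 * Fintype.card α) : ∃ c, #{u ∈ G.neighborFinset v | f u = c} ≤ 1 := by
  obtain ⟨c, -, hc⟩ := exists_card_fiber_lt_of_card_lt_mul (s := G.neighborFinset v) (t := univ)
    (f := f) (n := 2) (by rwa [card_neighborFinset_eq_degree, card_univ, mul_comm])
  exact ⟨c, Nat.lt_succ_iff.mp hc⟩

end SimpleGraph

/-- Gerencsér's theorem: every graph of maximum degree D has a 1-defective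
(⌊D/2⌋+1)-coloring. -/
theorem stmt2 {V : Type*} [Fintype V] (G : SimpleGraph V) [DecidableRel G.Adj]
    (D : ℕ) (hD : ∀ v, G.degree v ≤ D) :
    ∃ f : V → Fin (D / 2 + 1), ∀ v,
      ((G.neighborFinset v).filter (fun u => f u = f v)).card ≤ 1 := by
  classical
  obtain ⟨f, hf⟩ := Finite.exists_min (G.monochromaticDartCount (α := Fin (D / 2 + 1)))
  refine ⟨f, fun v => ?_⟩
  obtain ⟨c, hc⟩ := G.exists_card_filter_neighborFinset_le_one f v
    (by rw [Fintype.card_fin]; have := hD v; omega)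
  have hupdate := G.monochromaticDartCount_update_add f v c
  have hmin := hf (Function.update f v c)
  omega
end

section
/- Let G be a graph with a c-coloring phi, let S be a proper nonempty subset of V(G), and suppose the graph G^phi obtained by contracting S according to the coloring phi restricted to S admits a c^phi-coloring psi. Then the union of phi restricted to S and psi restricted to V(G)\S is a c-coloring of G. Equivalently: if S is a proper nonempty subset of V(G), phi is a c-coloring of G[S], and G is not c-colorable, then G^phi is not c^phi-colorable. -/
open scoped Classical

/-- A c-coloring of G. -/
def CColorable {V : Type*} (G : SimpleGraph V) (c1 c2 : V → ℤ) : Prop :=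
  ∃ f : V → Fin 2, ∀ v,
    ((G.neighborSet v ∩ {u | f u = f v}).ncard : ℤ) ≤ if f v = 0 then c1 v else c2 v

/-- N_i: vertices outside S having a neighbor in S of color i (color 1 is `0 : Fin 2`,
color 2 is `1 : Fin 2`). -/
def Nset {V : Type*} (G : SimpleGraph V) (S : Set V) (phi : V → Fin 2) (i : Fin 2) :
    Set V :=
  {u | u ∉ S ∧ ∃ s ∈ S, G.Adj u s ∧ phi s = i}

/-- The graph G^φ obtained from G by deleting S and adding vertices y₁ = inr 0
and y₂ = inr 1 with yᵢ adjacent to Nᵢ, and y₁y₂ an edge when both N₁, N₂ are nonempty. -/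
def Gphi {V : Type*} (G : SimpleGraph V) (S : Set V) (phi : V → Fin 2) :
    SimpleGraph ({v : V // v ∉ S} ⊕ Fin 2) where
  Adj x y :=
    match x, y with
    | Sum.inl u, Sum.inl w => G.Adj u.1 w.1
    | Sum.inl u, Sum.inr i => u.1 ∈ Nset G S phi i
    | Sum.inr i, Sum.inl u => u.1 ∈ Nset G S phi i
    | Sum.inr i, Sum.inr j =>
        i ≠ j ∧ (Nset G S phi 0).Nonempty ∧ (Nset G S phi 1).Nonempty
  symm := by
    constructor
    rintro (u | i) (w | j) h
    · exact G.symm.symm _ _ h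
    · exact h
    · exact h
    · exact ⟨h.1.symm, h.2⟩
  loopless := by
    constructor
    rintro (u | i) h
    · exact G.loopless.irrefl u.1 h
    · exact h.1 rfl

/-- First coordinate of c^φ: c₁ on old vertices, 0 on y₁, -1 on y₂. -/
noncomputable def cap1phi {V : Type*} (G : SimpleGraph V) (S : Set V) (phi : V → Fin 2)
    (c1 : V → ℤ) : ({v : V // v ∉ S} ⊕ Fin 2) → ℤ
  | Sum.inl u => c1 u.1
  | Sum.inr i => if i = 0 then 0 else -1

/-- Second coordinate of c^φ: c₂ on old vertices, 0 on y₂, and on y₁ it is -1 when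
N₂ = ∅ (the case c^φ(y₁) = (0,-1)) and 3 otherwise (the case c^φ(y₁) = (0,3)). -/
noncomputable def cap2phi {V : Type*} (G : SimpleGraph V) (S : Set V) (phi : V → Fin 2)
    (c2 : V → ℤ) : ({v : V // v ∉ S} ⊕ Fin 2) → ℤ
  | Sum.inl u => c2 u.1
  | Sum.inr i => if i = 0 then (if Nset G S phi 1 = ∅ then -1 else 3) else 0


/-!
The new vertex `y₂` has capacity `(-1, 0)`, so `ψ` must give it color 2 and then none of its
neighbours has color 2. If `N₁ ≠ ∅`, the vertex `y₁` must get color 1: either `N₂ = ∅` and its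
color-2 capacity is `-1`, or it is adjacent to `y₂`. Its color-1 capacity is `0`, so no vertex of
`N₁` gets color 1. Hence `ψ` gives no vertex of `Nᵢ` color `i`, and in the glued coloring no edge
between `S` and its complement is monochromatic: a vertex of `S` sees only its like-colored
neighbours in `G[S]`, and a vertex outside `S` only its like-colored neighbours in `G^φ`.
-/

def IsCColoring {V : Type*} (G : SimpleGraph V) (c1 c2 : V → ℤ) (f : V → Fin 2) : Prop :=
  ∀ v, ((G.neighborSet v ∩ {u | f u = f v}).ncard : ℤ) ≤ if f v = 0 then c1 v else c2 v

namespace IsCColoring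

variable {V : Type*} {G : SimpleGraph V} {c1 c2 : V → ℤ} {f : V → Fin 2}

theorem capacity_nonneg (hf : IsCColoring G c1 c2 f) (v : V) :
    0 ≤ if f v = 0 then c1 v else c2 v :=
  (Int.natCast_nonneg _).trans (hf v)

theorem ne_of_adj_of_capacity_nonpos [Finite V] (hf : IsCColoring G c1 c2 f) {v u : V}
    (hv : (if f v = 0 then c1 v else c2 v) ≤ 0) (huv : G.Adj v u) : f u ≠ f v := by
  intro h
  have hpos : 0 < (G.neighborSet v ∩ {u | f u = f v}).ncard :=
    (Set.ncard_pos (Set.toFinite _)).2 ⟨u, huv, h⟩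
  have := hf v
  omega

end IsCColoring

section Contraction

variable {V : Type*} {G : SimpleGraph V} {S : Set V} {phi : V → Fin 2}
  {c1 c2 : V → ℤ} {psi : ({v : V // v ∉ S} ⊕ Fin 2) → Fin 2}

theorem capacity_inr_self (i : Fin 2) :
    (if i = 0 then cap1phi G S phi c1 (Sum.inr i) else cap2phi G S phi c2 (Sum.inr i)) = 0 := by
  fin_cases i <;> rfl

variable (hpsi : IsCColoring (Gphi G S phi) (cap1phi G S phi c1) (cap2phi G S phi c2) psi)
include hpsi

theorem IsCColoring.color_y₂ : psi (Sum.inr 1) = 1 := by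
  by_contra h
  have := hpsi.capacity_nonneg (Sum.inr 1)
  simp [show psi (Sum.inr 1) = 0 by omega, cap1phi] at this

variable [Finite V]

theorem IsCColoring.color_y₁ (hN₁ : (Nset G S phi 0).Nonempty) : psi (Sum.inr 0) = 0 := by
  by_contra h
  have h₁ : psi (Sum.inr 0) = 1 := Fin.eq_one_of_ne_zero _ h
  by_cases hN₂ : Nset G S phi 1 = ∅
  · have := hpsi.capacity_nonneg (Sum.inr 0)
    simp [h₁, cap2phi, hN₂] at this
  · have hadj : (Gphi G S phi).Adj (Sum.inr 1) (Sum.inr 0) :=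
      ⟨by decide, hN₁, Set.nonempty_iff_ne_empty.2 hN₂⟩
    have hy₂ := hpsi.color_y₂
    refine hpsi.ne_of_adj_of_capacity_nonpos ?_ hadj (h₁.trans hy₂.symm)
    rw [hy₂, capacity_inr_self]

theorem IsCColoring.color_inr_of_nonempty {i : Fin 2} (hN : (Nset G S phi i).Nonempty) :
    psi (Sum.inr i) = i := by
  fin_cases i
  · exact hpsi.color_y₁ hN
  · exact hpsi.color_y₂

theorem IsCColoring.ne_of_mem_Nset {i : Fin 2} {u : {v : V // v ∉ S}}
    (hu : u.1 ∈ Nset G S phi i) : psi (Sum.inl u) ≠ i := by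
  have hy := hpsi.color_inr_of_nonempty ⟨u.1, hu⟩
  have hcap : (if psi (Sum.inr i) = 0 then cap1phi G S phi c1 (Sum.inr i)
      else cap2phi G S phi c2 (Sum.inr i)) ≤ 0 := by
    rw [hy, capacity_inr_self]
  exact hy ▸ hpsi.ne_of_adj_of_capacity_nonpos hcap (show (Gphi G S phi).Adj _ (Sum.inl u) from hu)

end Contraction

section Glue

variable {V : Type*} (S : Set V) (phi : V → Fin 2) (psi : ({v : V // v ∉ S} ⊕ Fin 2) → Fin 2)

noncomputable def glue (v : V) : Fin 2 :=
  if h : v ∈ S then phi v else psi (Sum.inl ⟨v, h⟩)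

variable {S phi psi}

@[simp] theorem glue_of_mem {v : V} (hv : v ∈ S) : glue S phi psi v = phi v := dif_pos hv

@[simp] theorem glue_of_notMem {v : V} (hv : v ∉ S) :
    glue S phi psi v = psi (Sum.inl ⟨v, hv⟩) := dif_neg hv

variable [Finite V] {G : SimpleGraph V} {c1 c2 : V → ℤ}
  (hpsi : IsCColoring (Gphi G S phi) (cap1phi G S phi c1) (cap2phi G S phi c2) psi)
include hpsi

theorem glue_ne_of_adj_of_mem {v u : V} (hv : v ∈ S) (hu : u ∉ S) (huv : G.Adj u v) :
    glue S phi psi u ≠ glue S phi psi v := by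
  rw [glue_of_mem hv, glue_of_notMem hu]
  exact hpsi.ne_of_mem_Nset (u := ⟨u, hu⟩) ⟨hu, v, hv, huv, rfl⟩

theorem glue_capacity_of_mem
    (hphi : ∀ v ∈ S, ((G.neighborSet v ∩ S ∩ {u | phi u = phi v}).ncard : ℤ) ≤
      if phi v = 0 then c1 v else c2 v)
    {v : V} (hv : v ∈ S) :
    ((G.neighborSet v ∩ {u | glue S phi psi u = glue S phi psi v}).ncard : ℤ) ≤
      if glue S phi psi v = 0 then c1 v else c2 v := by
  have hsub : G.neighborSet v ∩ {u | glue S phi psi u = glue S phi psi v} ⊆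
      G.neighborSet v ∩ S ∩ {u | phi u = phi v} := by
    rintro u ⟨hadj, hfu : glue S phi psi u = glue S phi psi v⟩
    by_cases hu : u ∈ S
    · exact ⟨⟨hadj, hu⟩, by rwa [glue_of_mem hu, glue_of_mem hv] at hfu⟩
    · exact absurd hfu (glue_ne_of_adj_of_mem hpsi hv hu hadj.symm)
  rw [glue_of_mem hv] at hsub ⊢
  exact (Int.ofNat_le.2 (Set.ncard_le_ncard hsub)).trans (hphi v hv)

theorem glue_capacity_of_notMem {v : V} (hv : v ∉ S) :
    ((G.neighborSet v ∩ {u | glue S phi psi u = glue S phi psi v}).ncard : ℤ) ≤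
      if glue S phi psi v = 0 then c1 v else c2 v := by
  set A := G.neighborSet v ∩ {u | glue S phi psi u = glue S phi psi v}
  have hA : A ⊆ Sᶜ := fun u ⟨hadj, hfu⟩ hu => glue_ne_of_adj_of_mem hpsi hu hv hadj hfu.symm
  have hcard : A.ncard ≤ ((Gphi G S phi).neighborSet (Sum.inl ⟨v, hv⟩) ∩
      {x | psi x = psi (Sum.inl ⟨v, hv⟩)}).ncard := by
    rw [← Set.inter_eq_left.2 hA, Set.compl_def, ← Set.ncard_subtype]
    refine Set.ncard_le_ncard_of_injOn Sum.inl ?_ Sum.inl_injective.injOn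
    rintro ⟨u, hu⟩ ⟨hadj, hfu⟩
    exact ⟨hadj, by simpa [glue_of_notMem hu, glue_of_notMem hv] using hfu⟩
  rw [glue_of_notMem hv]
  exact (Int.ofNat_le.2 hcard).trans (hpsi (Sum.inl ⟨v, hv⟩))

theorem isCColoring_glue
    (hphi : ∀ v ∈ S, ((G.neighborSet v ∩ S ∩ {u | phi u = phi v}).ncard : ℤ) ≤
      if phi v = 0 then c1 v else c2 v) :
    IsCColoring G c1 c2 (glue S phi psi) := fun v =>
  if hv : v ∈ S then glue_capacity_of_mem hpsi hphi hv else glue_capacity_of_notMem hpsi hv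

end Glue

theorem stmt10_general {V : Type*} [Fintype V] (G : SimpleGraph V) (c1 c2 : V → ℤ)
    (S : Set V)
    (phi : V → Fin 2)
    (hphi : ∀ v ∈ S,
      ((G.neighborSet v ∩ S ∩ {u | phi u = phi v}).ncard : ℤ) ≤
        if phi v = 0 then c1 v else c2 v)
    (hG : ¬ CColorable G c1 c2) :
    ¬ CColorable (Gphi G S phi) (cap1phi G S phi c1) (cap2phi G S phi c2) := by
  rintro ⟨psi, hpsi⟩
  exact hG ⟨glue S phi psi, isCColoring_glue hpsi hphi⟩

/-- Lemma 5 (first assertion): if S is a proper nonempty subset of V(G), φ is a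
c-coloring of G[S], and G is not c-colorable, then G^φ is not c^φ-colorable. -/
theorem stmt10 {V : Type*} [Fintype V] (G : SimpleGraph V) (c1 c2 : V → ℤ)
    (hc1 : ∀ v, -1 ≤ c1 v ∧ c1 v ≤ 1) (hc2 : ∀ v, -1 ≤ c2 v ∧ c2 v ≤ 3)
    (S : Set V) (hS1 : S.Nonempty) (hS2 : S ≠ Set.univ)
    (phi : V → Fin 2)
    (hphi : ∀ v ∈ S,
      ((G.neighborSet v ∩ S ∩ {u | phi u = phi v}).ncard : ℤ) ≤
        if phi v = 0 then c1 v else c2 v)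
    (hG : ¬ CColorable G c1 c2) :
    ¬ CColorable (Gphi G S phi) (cap1phi G S phi c1) (cap2phi G S phi c2) :=
  stmt10_general G c1 c2 S phi hphi hG
end

section
/- No (1,3)-critical graph contains two adjacent vertices both of degree 2. -/
/-! Delete the edge `uv` between two vertices of degree 2, with other neighbours `x` of `u` and
`y` of `v`, and (1,3)-colour what is left. Giving `u` the colour opposite to `x` and `v` the
colour opposite to `y` then colours `G`: each of `u`, `v` has at most one neighbour of its own
colour, and no other vertex gains a neighbour of its own colour. -/

/-- G is (1,3)-colorable. -/
def Colorable13 {V : Type*} (G : SimpleGraph V) : Prop :=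
  ∃ f : V → Bool,
    (∀ v, f v = true → (G.neighborSet v ∩ {u | f u = true}).ncard ≤ 1) ∧
    (∀ v, f v = false → (G.neighborSet v ∩ {u | f u = false}).ncard ≤ 3)

/-- G is (1,3)-critical. -/
def Critical13 {V : Type*} (G : SimpleGraph V) : Prop :=
  ¬ Colorable13 G ∧ ∀ H : G.Subgraph, H ≠ ⊤ → Colorable13 H.coe

lemma Set.exists_eq_pair_of_mem_of_ncard_eq_two {α : Type*} {s : Set α} {a : α} (ha : a ∈ s)
    (hs : s.ncard = 2) : ∃ b, s = {a, b} := by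
  obtain ⟨b, hb⟩ := Set.ncard_eq_one.mp (by rw [Set.ncard_sdiff_singleton_of_mem ha, hs])
  exact ⟨b, by rw [← hb, Set.insert_sdiff_singleton, Set.insert_eq_of_mem ha]⟩

namespace SimpleGraph

variable {V W : Type*}

def sameColorNeighborSet (G : SimpleGraph V) (f : V → Bool) (v : V) : Set V :=
  G.neighborSet v ∩ {u | f u = f v}

def IsColoring13 (G : SimpleGraph V) (f : V → Bool) : Prop :=
  ∀ v, (G.sameColorNeighborSet f v).ncard ≤ cond (f v) 1 3

lemma colorable13_iff_exists_isColoring13 {G : SimpleGraph V} :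
    Colorable13 G ↔ ∃ f, G.IsColoring13 f := by
  refine exists_congr fun f => ⟨fun ⟨h1, h3⟩ v => ?_, fun h => ⟨fun v hv => ?_, fun v hv => ?_⟩⟩
  · cases hv : f v
    · simpa [sameColorNeighborSet, hv] using h3 v hv
    · simpa [sameColorNeighborSet, hv] using h1 v hv
  · simpa [sameColorNeighborSet, hv] using h v
  · simpa [sameColorNeighborSet, hv] using h v

lemma Iso.image_sameColorNeighborSet {G : SimpleGraph V} {G' : SimpleGraph W} (e : G ≃g G')
    (f : W → Bool) (v : V) :
    e '' G.sameColorNeighborSet (f ∘ e) v = G'.sameColorNeighborSet f (e v) := by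
  ext w
  obtain ⟨u, rfl⟩ := e.surjective w
  simp [sameColorNeighborSet, e.injective.eq_iff, e.map_adj_iff]

lemma Iso.isColoring13_comp {G : SimpleGraph V} {G' : SimpleGraph W} (e : G ≃g G')
    {f : W → Bool} (hf : G'.IsColoring13 f) : G.IsColoring13 (f ∘ e) := fun v => by
  rw [← Set.ncard_image_of_injective _ e.injective, e.image_sameColorNeighborSet]
  exact hf (e v)

lemma Iso.colorable13 {G : SimpleGraph V} {G' : SimpleGraph W} (e : G ≃g G')
    (h : Colorable13 G') : Colorable13 G := by
  obtain ⟨f, hf⟩ := colorable13_iff_exists_isColoring13.mp h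
  exact colorable13_iff_exists_isColoring13.mpr ⟨_, e.isColoring13_comp hf⟩

lemma Subgraph.IsSpanning.colorable13_spanningCoe {G : SimpleGraph V} {H : G.Subgraph}
    (hH : H.IsSpanning) (h : Colorable13 H.coe) : Colorable13 H.spanningCoe :=
  (H.spanningCoeEquivCoeOfSpanning hH).colorable13 h

lemma ncard_sameColorNeighborSet_le_of_subset_singleton {G : SimpleGraph V} {f : V → Bool}
    {v t : V} (h : G.sameColorNeighborSet f v ⊆ {t}) :
    (G.sameColorNeighborSet f v).ncard ≤ cond (f v) 1 3 :=
  calc (G.sameColorNeighborSet f v).ncard ≤ ({t} : Set V).ncard := Set.ncard_le_ncard h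
    _ ≤ cond (f v) 1 3 := by cases f v <;> simp

variable {G G' : SimpleGraph V} {F g : V → Bool} {u v : V}

lemma IsColoring13.of_eq_off_pair [Finite V] (hF : G'.IsColoring13 F)
    (hG' : ∀ ⦃w z⦄, G.Adj w z → w ≠ u → w ≠ v → z ≠ u → z ≠ v → G'.Adj w z)
    (hg : ∀ w, w ≠ u → w ≠ v → g w = F w)
    (hu : ∀ w ∈ G.neighborSet u, w ≠ v → g w ≠ g u)
    (hv : ∀ w ∈ G.neighborSet v, w ≠ u → g w ≠ g v) : G.IsColoring13 g := by
  intro w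
  by_cases hwu : w = u
  · subst hwu
    exact ncard_sameColorNeighborSet_le_of_subset_singleton fun z ⟨hz, hgz⟩ =>
      by_contra fun hzv => hu z hz hzv hgz
  by_cases hwv : w = v
  · subst hwv
    exact ncard_sameColorNeighborSet_le_of_subset_singleton fun z ⟨hz, hgz⟩ =>
      by_contra fun hzu => hv z hz hzu hgz
  have hsub : G.sameColorNeighborSet g w ⊆ G'.sameColorNeighborSet F w := by
    rintro z ⟨hz, hgz⟩
    have hzu : z ≠ u := by rintro rfl; exact hu w hz.symm hwv hgz.symm
    have hzv : z ≠ v := by rintro rfl; exact hv w hz.symm hwu hgz.symm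
    exact ⟨hG' hz hwu hwv hzu hzv, (hg z hzu hzv).symm.trans (hgz.trans (hg w hwu hwv))⟩
  calc (G.sameColorNeighborSet g w).ncard ≤ (G'.sameColorNeighborSet F w).ncard :=
        Set.ncard_le_ncard hsub
    _ ≤ cond (g w) 1 3 := hg w hwu hwv ▸ hF w

lemma colorable13_of_colorable13_deleteEdges [Finite V] {x y : V} (huv : u ≠ v)
    (hux : G.neighborSet u ⊆ {v, x}) (hvy : G.neighborSet v ⊆ {u, y})
    (h : Colorable13 (G.deleteEdges {s(u, v)})) : Colorable13 G := by
  classical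
  obtain ⟨F, hF⟩ := colorable13_iff_exists_isColoring13.mp h
  let g : V → Bool := fun w => if w = u then !F x else if w = v then !F y else F w
  refine colorable13_iff_exists_isColoring13.mpr
    ⟨g, hF.of_eq_off_pair (u := u) (v := v) ?_ ?_ ?_ ?_⟩
  · intro w z hwz hwu hwv _ _
    simp [hwz, hwu, hwv]
  · intro w hwu hwv
    simp [g, hwu, hwv]
  · intro w hw hwv
    obtain rfl : w = x := by simpa [hwv] using hux hw
    simp [g, hwv, hw.ne']
  · intro w hw hwu
    obtain rfl : w = y := by simpa [hwu] using hvy hw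
    simp [g, hwu, hw.ne', huv.symm]

lemma _root_.Critical13.colorable13_deleteEdges (h : Critical13 G) (huv : G.Adj u v) :
    Colorable13 (G.deleteEdges {s(u, v)}) := by
  let H : G.Subgraph := (⊤ : G.Subgraph).deleteEdges {s(u, v)}
  have hH : H ≠ ⊤ := fun hH => by
    have : H.Adj u v := hH ▸ huv
    simp [H] at this
  have hH_spanningCoe : H.spanningCoe = G.deleteEdges {s(u, v)} := by
    ext; simp [H]
  exact hH_spanningCoe ▸ Subgraph.IsSpanning.colorable13_spanningCoe (fun _ => trivial) (h.2 H hH)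

end SimpleGraph

/-- No (1,3)-critical graph contains two adjacent vertices both of degree 2. -/
theorem stmt13 {V : Type*} [Fintype V] (G : SimpleGraph V) (h : Critical13 G) :
    ¬ ∃ u v : V, G.Adj u v ∧ (G.neighborSet u).ncard = 2 ∧
      (G.neighborSet v).ncard = 2 := by
  rintro ⟨u, v, huv, hu, hv⟩
  obtain ⟨x, hux⟩ := Set.exists_eq_pair_of_mem_of_ncard_eq_two huv hu
  obtain ⟨y, hvy⟩ := Set.exists_eq_pair_of_mem_of_ncard_eq_two huv.symm hv
  exact h.1 <| SimpleGraph.colorable13_of_colorable13_deleteEdges huv.ne hux.subset hvy.subset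
    (h.colorable13_deleteEdges huv)
end
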